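/- arXiv:0905.3052 — 3 statements merged into one kernel-verified Lean document; each statement's English description precedes it below -/
import Mathlib

section
/- Let F be a fractal subset of [0,1] satisfying the lacunarity condition with some constant λ ∈ (0,1]. Then the Hausdorff dimension of F is strictly positive: dim_H F > 0. -/
open MeasureTheory Filter Set
open scoped Classical

noncomputable section

/-- The enlargement `B̄^a` of the interval `[s,t]` by the factor `1+a` about its centre. -/
def enlarge (a s t : ℝ) : Set ℝ :=
  Set.Icc (s - a * (t - s) / 2) (t + a * (t - s) / 2)

/-- The moment sum `Σ_{B ∈ B_r^*} μ(B̄^a)^q` over grid intervals of length `r`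
whose interior meets the support of `μ` (i.e. with `μ(B) > 0`). -/
def gridSum (μ : Measure ℝ) (a q R : ℝ) : ℝ :=
  ∑' m : ℤ, if 0 < μ (Set.Icc ((m : ℝ) * R) (((m : ℝ) + 1) * R))
    then (μ (enlarge a ((m : ℝ) * R) (((m : ℝ) + 1) * R))).toReal ^ q else 0

/-- The coarse multifractal moment function
`β_a(q) = inf{β : limsup_{r→0⁺} r^β Σ_{B ∈ B_r^*} μ(B̄^a)^q = 0}`.
(For the nonnegative quantity `r^β · Σ…`, vanishing of the `limsup` as `r → 0⁺`
is the same as convergence to `0`.) -/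
def betaA (μ : Measure ℝ) (a q : ℝ) : ℝ :=
  sInf {β : ℝ | Filter.Tendsto (fun R => R ^ β * gridSum μ a q R)
    (nhdsWithin 0 (Set.Ioi 0)) (nhds 0)}

/-- `F` is a "fractal subset" of `[0,1]`: compact, Lebesgue-null, containing `0` and `1`. -/
def IsFractalSubset (F : Set ℝ) : Prop :=
  IsCompact F ∧ F ⊆ Set.Icc 0 1 ∧ (0 : ℝ) ∈ F ∧ (1 : ℝ) ∈ F ∧ MeasureTheory.volume F = 0

/-- The complementary intervals `I_n = (l n, r n)` of `F` in `[0,1]`, enumerated with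
nonincreasing lengths. -/
structure FractalComplement (F : Set ℝ) where
  l : ℕ → ℝ
  r : ℕ → ℝ
  lt : ∀ n, l n < r n
  disj : Pairwise fun n m => Disjoint (Set.Ioo (l n) (r n)) (Set.Ioo (l m) (r m))
  union : (⋃ n, Set.Ioo (l n) (r n)) = Set.Icc (0 : ℝ) 1 \ F
  mono : ∀ n, r (n + 1) - l (n + 1) ≤ r n - l n

/-- The length `|I_n|` of the `n`-th complementary interval. -/
def FractalComplement.len {F : Set ℝ} (c : FractalComplement F) (n : ℕ) : ℝ := c.r n - c.l n

/-- The enlargement `Ī_n^a` of the closure of the complementary interval `I_n`. -/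
def FractalComplement.I {F : Set ℝ} (c : FractalComplement F) (a : ℝ) (n : ℕ) : Set ℝ :=
  enlarge a (c.l n) (c.r n)

/-- The lacunarity condition with constant `lam`: every interval `[x-r, x+r]` with `x ∈ F`
and `0 < r ≤ 1` contains a complementary interval of length at least `lam * r`. -/
def Lacunary {F : Set ℝ} (c : FractalComplement F) (lam : ℝ) : Prop :=
  ∀ x ∈ F, ∀ R : ℝ, 0 < R → R ≤ 1 → ∃ n,
    Set.Ioo (c.l n) (c.r n) ⊆ Set.Icc (x - R) (x + R) ∧ lam * R ≤ c.len n

/-- The topological support of `μ` is exactly `F`. -/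
def HasSupport (μ : Measure ℝ) (F : Set ℝ) : Prop :=
  μ Fᶜ = 0 ∧ ∀ x ∈ F, ∀ ε : ℝ, 0 < ε → 0 < μ (Set.Ioo (x - ε) (x + ε))

/-!
Lacunarity makes `F` uniformly perfect: the complementary interval found in `[x - r, x + r]` has
an endpoint `y ∈ F` with `λ r ≤ |y - x| ≤ r`. In a complete uniformly perfect space one grows a
binary Cantor scheme: at level `n` each point either stays or jumps by a distance in
`[κ γⁿ, γⁿ]`, with `γ = κ / 4`. Branches that split at level `n` end up at distance at least
`κ γⁿ / 3`, so reading the address of a limit point as a binary expansion gives a Hölder map of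
exponent `log 2 / log (4 / κ)` from the limit set onto `[0, 1]`, which has dimension one.
-/

open Topology Function
open scoped NNReal

theorem dimH_range_le_of_dist_le_rpow {A X Y : Type*} [Nonempty A] [MetricSpace X]
    [MetricSpace Y] {f : A → X} {g : A → Y} {C s : ℝ≥0} (hs : 0 < s)
    (hfg : ∀ a b, dist (g a) (g b) ≤ C * dist (f a) (f b) ^ (s : ℝ)) :
    dimH (range g) ≤ dimH (range f) / s := by
  have hg : ∀ a, g (invFun f (f a)) = g a := fun a => dist_le_zero.1 <| by
    simpa [invFun_eq ⟨a, rfl⟩, Real.zero_rpow (NNReal.coe_pos.2 hs).ne'] using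
      hfg (invFun f (f a)) a
  have himage : (g ∘ invFun f) '' range f = range g := by
    rw [← range_comp]
    exact congrArg range (funext hg)
  have hholder : HolderOnWith C s (g ∘ invFun f) (range f) := by
    rintro _ ⟨a, rfl⟩ _ ⟨b, rfl⟩
    rw [comp_apply, comp_apply, hg, hg, edist_dist, edist_dist,
      ENNReal.ofReal_rpow_of_nonneg dist_nonneg s.coe_nonneg, ← ENNReal.ofReal_coe_nnreal,
      ← ENNReal.ofReal_mul C.coe_nonneg]
    exact ENNReal.ofReal_le_ofReal (hfg a b)
  exact himage ▸ hholder.dimH_image_le hs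

def IsUniformlyPerfect (X : Type*) [PseudoMetricSpace X] (κ : ℝ) : Prop :=
  ∀ x : X, ∀ r : ℝ, 0 < r → r ≤ 1 → ∃ y, κ * r ≤ dist x y ∧ dist x y ≤ r

theorem IsUniformlyPerfect.le_one {X : Type*} [PseudoMetricSpace X] [Nonempty X] {κ : ℝ}
    (h : IsUniformlyPerfect X κ) : κ ≤ 1 := by
  obtain ⟨y, hlow, hup⟩ := h (Classical.arbitrary X) 1 one_pos le_rfl
  linarith

section CantorScheme

variable {X : Type*} (next : X → ℕ → X) (x₀ : X)

def cantorPath (ω : ℕ → Fin 2) : ℕ → X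
  | 0 => x₀
  | n + 1 => if ω n = 0 then cantorPath ω n else next (cantorPath ω n) n

theorem cantorPath_eq_of_forall_lt_eq {ω ω' : ℕ → Fin 2} {n : ℕ} (h : ∀ k < n, ω k = ω' k) :
    cantorPath next x₀ ω n = cantorPath next x₀ ω' n := by
  induction n with
  | zero => rfl
  | succ n ih =>
    simp only [cantorPath, ih fun k hk => h k (hk.trans n.lt_succ_self), h n n.lt_succ_self]

variable [MetricSpace X]

def cantorPoint (ω : ℕ → Fin 2) : X :=
  haveI : Nonempty X := ⟨x₀⟩
  limUnder atTop (cantorPath next x₀ ω)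

variable {next x₀} {κ γ : ℝ}
  (hnext : ∀ x n, κ * γ ^ n ≤ dist x (next x n) ∧ dist x (next x n) ≤ γ ^ n)
include hnext

theorem dist_cantorPath_succ_le (ω : ℕ → Fin 2) (n : ℕ) :
    dist (cantorPath next x₀ ω n) (cantorPath next x₀ ω (n + 1)) ≤ γ ^ n := by
  rw [cantorPath]
  split_ifs
  · rw [dist_self]
    exact dist_nonneg.trans (hnext x₀ n).2
  · exact (hnext _ n).2

variable [CompleteSpace X] (hγ : γ < 1)
include hγ

theorem tendsto_cantorPoint (ω : ℕ → Fin 2) :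
    Tendsto (cantorPath next x₀ ω) atTop (𝓝 (cantorPoint next x₀ ω)) :=
  (cauchySeq_of_le_geometric γ 1 hγ
    (by simpa using dist_cantorPath_succ_le hnext ω)).tendsto_limUnder

theorem dist_cantorPath_cantorPoint_le (ω : ℕ → Fin 2) (n : ℕ) :
    dist (cantorPath next x₀ ω n) (cantorPoint next x₀ ω) ≤ γ ^ n / (1 - γ) := by
  simpa using dist_le_of_le_geometric_of_tendsto γ 1 hγ
    (by simpa using dist_cantorPath_succ_le hnext ω)
    (tendsto_cantorPoint hnext hγ ω) n

theorem le_dist_cantorPoint {ω ω' : ℕ → Fin 2} {n : ℕ} (h : ∀ k < n, ω k = ω' k)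
    (hn : ω n ≠ ω' n) :
    κ * γ ^ n - 2 * (γ ^ (n + 1) / (1 - γ)) ≤
      dist (cantorPoint next x₀ ω) (cantorPoint next x₀ ω') := by
  have hsplit :
      κ * γ ^ n ≤ dist (cantorPath next x₀ ω (n + 1)) (cantorPath next x₀ ω' (n + 1)) := by
    simp only [cantorPath, cantorPath_eq_of_forall_lt_eq next x₀ h]
    by_cases h0 : ω n = 0
    · have h0' : ω' n ≠ 0 := h0 ▸ hn.symm
      simpa [h0, h0'] using (hnext _ n).1
    · have h0' : ω' n = 0 := by omega
      simpa [h0, h0', dist_comm] using (hnext _ n).1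
  have := dist_triangle4 (cantorPath next x₀ ω (n + 1)) (cantorPoint next x₀ ω)
    (cantorPoint next x₀ ω') (cantorPath next x₀ ω' (n + 1))
  linarith [dist_cantorPath_cantorPoint_le (x₀ := x₀) hnext hγ ω (n + 1),
    dist_comm (cantorPath next x₀ ω' (n + 1)) (cantorPoint next x₀ ω'),
    dist_cantorPath_cantorPoint_le (x₀ := x₀) hnext hγ ω' (n + 1)]

end CantorScheme

theorem logb_four_div_two_pos {κ : ℝ} (hκ0 : 0 < κ) (hκ1 : κ ≤ 1) : 0 < Real.logb (4 / κ) 2 :=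
  Real.logb_pos (by rw [lt_div_iff₀ hκ0]; linarith) one_lt_two

theorem pow_rpow_logb_eq_inv {κ : ℝ} (hκ0 : 0 < κ) (hκ1 : κ ≤ 1) (n : ℕ) :
    ((κ / 4) ^ n) ^ Real.logb (4 / κ) 2 = (2 ^ n)⁻¹ := by
  have h4κ : 1 < 4 / κ := by rw [lt_div_iff₀ hκ0]; linarith
  rw [← Real.rpow_pow_comm (by positivity), ← inv_div, Real.inv_rpow (by positivity),
    Real.rpow_logb (by positivity) h4κ.ne' two_pos, inv_pow]

theorem dist_ofDigits_le_rpow_dist_cantorPoint {X : Type*} [MetricSpace X] [CompleteSpace X]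
    {next : X → ℕ → X} (x₀ : X) {κ : ℝ} (hκ0 : 0 < κ) (hκ1 : κ ≤ 1)
    (hnext : ∀ x n, κ * (κ / 4) ^ n ≤ dist x (next x n) ∧ dist x (next x n) ≤ (κ / 4) ^ n)
    (ω ω' : ℕ → Fin 2) :
    dist (Real.ofDigits ω) (Real.ofDigits ω') ≤ (3 / κ) ^ Real.logb (4 / κ) 2 *
      dist (cantorPoint next x₀ ω) (cantorPoint next x₀ ω') ^ Real.logb (4 / κ) 2 := by
  set s := Real.logb (4 / κ) 2
  rcases eq_or_ne ω ω' with rfl | hne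
  · rw [dist_self]
    positivity
  set n := PiNat.firstDiff ω ω'
  have hagree : ∀ k < n, ω k = ω' k := fun k hk => PiNat.apply_eq_of_lt_firstDiff hk
  have hdigits : dist (Real.ofDigits ω) (Real.ofDigits ω') ≤ ((κ / 4) ^ n) ^ s := by
    rw [Real.dist_eq, pow_rpow_logb_eq_inv hκ0 hκ1]
    exact_mod_cast Real.abs_ofDigits_sub_ofDigits_le hagree
  have hpow : 0 < (κ / 4) ^ n := by positivity
  -- `γ = κ / 4` is small enough that each tail `γⁿ⁺¹ / (1 - γ)` is at most a third of `κ γⁿ`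
  have htail : (κ / 4) ^ (n + 1) / (1 - κ / 4) ≤ κ / 3 * (κ / 4) ^ n := by
    rw [pow_succ, div_le_iff₀ (by linarith)]
    nlinarith [mul_nonneg (mul_pos hpow hκ0).le (sub_nonneg.2 hκ1)]
  have hsep : κ / 3 * (κ / 4) ^ n ≤ dist (cantorPoint next x₀ ω) (cantorPoint next x₀ ω') := by
    have := le_dist_cantorPoint (x₀ := x₀) hnext (by linarith) hagree
      (PiNat.apply_firstDiff_ne hne)
    linarith
  calc dist (Real.ofDigits ω) (Real.ofDigits ω') ≤ ((κ / 4) ^ n) ^ s := hdigits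
    _ = (3 / κ * (κ / 3 * (κ / 4) ^ n)) ^ s := by field_simp
    _ ≤ (3 / κ * dist (cantorPoint next x₀ ω) (cantorPoint next x₀ ω')) ^ s := by
      have hs : 0 < s := logb_four_div_two_pos hκ0 hκ1
      gcongr
    _ = _ := Real.mul_rpow (by positivity) dist_nonneg

theorem dimH_Icc_zero_one : dimH (Icc (0 : ℝ) 1) = 1 := by
  rw [Real.dimH_of_nonempty_interior (by simp), Module.finrank_self, Nat.cast_one]

theorem IsUniformlyPerfect.ofReal_logb_le_dimH {X : Type*} [MetricSpace X] [CompleteSpace X]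
    [Nonempty X] {κ : ℝ} (h : IsUniformlyPerfect X κ) (hκ0 : 0 < κ) :
    ENNReal.ofReal (Real.logb (4 / κ) 2) ≤ dimH (univ : Set X) := by
  have hκ1 := h.le_one
  set s := Real.logb (4 / κ) 2
  have hs : 0 < s := logb_four_div_two_pos hκ0 hκ1
  choose next hnext using fun x (n : ℕ) =>
    h x ((κ / 4) ^ n) (by positivity) (pow_le_one₀ (by positivity) (by linarith))
  have hholder := dimH_range_le_of_dist_le_rpow (C := ((3 / κ) ^ s).toNNReal)
    (Real.toNNReal_pos.2 hs) fun ω ω' => by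
      rw [Real.coe_toNNReal _ (by positivity), Real.coe_toNNReal _ hs.le]
      exact dist_ofDigits_le_rpow_dist_cantorPoint (Classical.arbitrary X) hκ0 hκ1 hnext ω ω'
  have hIcc : Icc (0 : ℝ) 1 ⊆ range (Real.ofDigits (b := 2)) := by
    simpa [SurjOn] using Real.ofDigits_SurjOn one_lt_two
  have hone : 1 ≤ dimH (range (cantorPoint next (Classical.arbitrary X))) / ENNReal.ofReal s :=
    dimH_Icc_zero_one ▸ (dimH_mono hIcc).trans hholder
  rw [ENNReal.le_div_iff_mul_le (by simp [hs]) (by simp), one_mul] at hone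
  exact hone.trans (dimH_mono (subset_univ _))

theorem IsUniformlyPerfect.dimH_univ_pos {X : Type*} [MetricSpace X] [CompleteSpace X]
    [Nonempty X] {κ : ℝ} (h : IsUniformlyPerfect X κ) (hκ0 : 0 < κ) :
    0 < dimH (univ : Set X) :=
  (ENNReal.ofReal_pos.2 (logb_four_div_two_pos hκ0 h.le_one)).trans_le
    (h.ofReal_logb_le_dimH hκ0)

theorem Icc_subset_of_Ioo_subset_of_isClosed {α : Type*} [TopologicalSpace α] [LinearOrder α]
    [OrderTopology α] [DenselyOrdered α] {a b : α} {s : Set α} (hab : a ≠ b)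
    (hs : IsClosed s) (h : Ioo a b ⊆ s) : Icc a b ⊆ s :=
  closure_Ioo hab ▸ closure_minimal h hs

namespace FractalComplement

variable {F : Set ℝ} (c : FractalComplement F)

theorem Ioo_subset (n : ℕ) : Ioo (c.l n) (c.r n) ⊆ Icc 0 1 \ F :=
  c.union ▸ subset_iUnion (fun m => Ioo (c.l m) (c.r m)) n

theorem mem_of_mem_Icc_of_notMem_Ioo {n : ℕ} {x : ℝ} (hx : x ∈ Icc (c.l n) (c.r n))
    (hx' : x ∉ Ioo (c.l n) (c.r n)) : x ∈ F := by
  by_contra hxF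
  have hgap : x ∈ Icc 0 1 \ F := ⟨Icc_subset_of_Ioo_subset_of_isClosed (c.lt n).ne isClosed_Icc
    (fun y hy => (c.Ioo_subset n hy).1) hx, hxF⟩
  rw [← c.union, mem_iUnion] at hgap
  obtain ⟨m, hm⟩ := hgap
  have hmn : m ≠ n := by
    rintro rfl
    exact hx' hm
  rw [← closure_Ioo (c.lt n).ne] at hx
  exact disjoint_left.1 ((c.disj hmn).closure_right isOpen_Ioo) hm hx

theorem l_mem (n : ℕ) : c.l n ∈ F :=
  c.mem_of_mem_Icc_of_notMem_Ioo (left_mem_Icc.2 (c.lt n).le) fun h => lt_irrefl _ h.1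

theorem r_mem (n : ℕ) : c.r n ∈ F :=
  c.mem_of_mem_Icc_of_notMem_Ioo (right_mem_Icc.2 (c.lt n).le) fun h => lt_irrefl _ h.2

end FractalComplement

theorem Lacunary.isUniformlyPerfect {F : Set ℝ} {c : FractalComplement F} {lam : ℝ}
    (hlac : Lacunary c lam) : IsUniformlyPerfect F lam := by
  rintro ⟨x, hx⟩ R hR0 hR1
  obtain ⟨n, hsub, hlen⟩ := hlac x hx R hR0 hR1
  have hends := Icc_subset_of_Ioo_subset_of_isClosed (c.lt n).ne isClosed_Icc hsub
  have hl := hends (left_mem_Icc.2 (c.lt n).le)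
  have hr := hends (right_mem_Icc.2 (c.lt n).le)
  have hxn : x ∉ Ioo (c.l n) (c.r n) := fun h => (c.Ioo_subset n h).2 hx
  unfold FractalComplement.len at hlen
  rw [mem_Ioo, not_and_or, not_lt, not_lt] at hxn
  rcases hxn with hxl | hrx
  · refine ⟨⟨c.r n, c.r_mem n⟩, ?_⟩
    rw [Subtype.dist_eq, Real.dist_eq, abs_of_nonpos (by linarith [c.lt n])]
    constructor <;> linarith [hr.2]
  · refine ⟨⟨c.l n, c.l_mem n⟩, ?_⟩
    rw [Subtype.dist_eq, Real.dist_eq, abs_of_nonneg (by linarith [c.lt n])]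
    constructor <;> linarith [hl.1]

theorem stmt_7_general (F : Set ℝ) (hF : IsFractalSubset F) (c : FractalComplement F)
    (lam : ℝ) (hlam0 : 0 < lam) (hlac : Lacunary c lam) :
    0 < dimH F := by
  obtain ⟨hcompact, -, h0, -, -⟩ := hF
  have : CompleteSpace F := hcompact.isComplete.completeSpace_coe
  have : Nonempty F := ⟨⟨0, h0⟩⟩
  rw [← Subtype.coe_image_univ F, isometry_subtype_coe.dimH_image]
  exact hlac.isUniformlyPerfect.dimH_univ_pos hlam0

/-- a fractal subset of `[0,1]` satisfying the lacunarity condition has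
strictly positive Hausdorff dimension. -/
theorem stmt_7 (F : Set ℝ) (hF : IsFractalSubset F) (c : FractalComplement F)
    (lam : ℝ) (hlam0 : 0 < lam) (hlam1 : lam ≤ 1) (hlac : Lacunary c lam) :
    0 < dimH F :=
  stmt_7_general F hF c lam hlam0 hlac
end
end

section
/- Let F be a fractal subset of [0,1] with complementary intervals (I_n) satisfying the lacunarity condition with constant λ ∈ (0,1], and let a ≥ 2/λ. Then for every 0 < r ≤ 1, every point x ∈ F lies in at least one and at most (a+2)/λ of the intervals { Ī_n^a : n with λr ≤ |I_n| ≤ r }; that is, 1 ≤ #{ n : λr ≤ |I_n| ≤ r and x ∈ Ī_n^a } ≤ (a+2)/λ. -/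
open MeasureTheory Filter Set
open scoped Classical

noncomputable section

/-- under the lacunarity condition with constant `lam`, for `a ≥ 2/lam`
every `x ∈ F` lies in at least one and at most `(a+2)/lam` of the enlarged intervals
`Ī_n^a` with `lam·r ≤ |I_n| ≤ r`. -/
theorem stmt_9 (F : Set ℝ) (hF : IsFractalSubset F) (c : FractalComplement F)
    (lam : ℝ) (hlam0 : 0 < lam) (hlam1 : lam ≤ 1) (hlac : Lacunary c lam)
    (a : ℝ) (ha : 2 / lam ≤ a)
    (R : ℝ) (hR0 : 0 < R) (hR1 : R ≤ 1) (x : ℝ) (hx : x ∈ F) :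
    {n : ℕ | lam * R ≤ c.len n ∧ c.len n ≤ R ∧ x ∈ c.I a n}.Finite ∧
    1 ≤ {n : ℕ | lam * R ≤ c.len n ∧ c.len n ≤ R ∧ x ∈ c.I a n}.ncard ∧
    ({n : ℕ | lam * R ≤ c.len n ∧ c.len n ≤ R ∧ x ∈ c.I a n}.ncard : ℝ) ≤ (a + 2) / lam := by
  classical
  have ha0 : (0:ℝ) < a := lt_of_lt_of_le (div_pos two_pos hlam0) ha
  have halam : (2:ℝ) ≤ a * lam := by
    rw [div_le_iff₀ hlam0] at ha; linarith
  set S := {n : ℕ | lam * R ≤ c.len n ∧ c.len n ≤ R ∧ x ∈ c.I a n} with hSdef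
  have hxnot : ∀ n, x ∉ Set.Ioo (c.l n) (c.r n) := by
    intro n hn
    have : x ∈ Set.Icc (0:ℝ) 1 \ F := by
      rw [← c.union]; exact Set.mem_iUnion.2 ⟨n, hn⟩
    exact this.2 hx
  have hkey : ∀ {L : ℝ}, lam * R ≤ L → R ≤ a * L / 2 := by
    intro L hL
    nlinarith [mul_le_mul_of_nonneg_left hL ha0.le,
      mul_le_mul_of_nonneg_right halam hR0.le]
  -- existence of a good interval
  obtain ⟨n0, hsub, hlen⟩ := hlac x hx R hR0 hR1
  have hlt0 := c.lt n0
  have hsub' : x - R ≤ c.l n0 ∧ c.r n0 ≤ x + R := by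
    have hcl : Set.Icc (c.l n0) (c.r n0) ⊆ Set.Icc (x - R) (x + R) := by
      rw [← closure_Ioo hlt0.ne]
      exact closure_minimal hsub isClosed_Icc
    exact (Set.Icc_subset_Icc_iff hlt0.le).1 hcl
  have hlenR : c.len n0 ≤ R := by
    by_contra h
    push_neg at h
    have hlen' : R < c.r n0 - c.l n0 := h
    exact hxnot n0 ⟨by linarith [hsub'.2], by linarith [hsub'.1]⟩
  have hn0S : n0 ∈ S := by
    refine ⟨hlen, hlenR, ?_⟩
    have hk := hkey hlen
    simp only [FractalComplement.len] at hk
    simp only [FractalComplement.I, enlarge, Set.mem_Icc]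
    exact ⟨by linarith [hsub'.1, hsub'.2], by linarith [hsub'.1, hsub'.2]⟩
  -- counting lemma
  have hcount : ∀ T : Finset ℕ, ↑T ⊆ S → (T.card : ℝ) * (lam * R) ≤ (a + 2) * R := by
    intro T hT
    have hdisj : (T : Set ℕ).PairwiseDisjoint fun n => Set.Ioo (c.l n) (c.r n) :=
      fun i _ j _ hij => c.disj hij
    have hU : volume (⋃ n ∈ T, Set.Ioo (c.l n) (c.r n))
        = ∑ n ∈ T, volume (Set.Ioo (c.l n) (c.r n)) :=
      measure_biUnion_finset hdisj fun n _ => measurableSet_Ioo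
    have hsub2 : (⋃ n ∈ T, Set.Ioo (c.l n) (c.r n))
        ⊆ Set.Icc (x - (a/2+1)*R) (x + (a/2+1)*R) := by
      intro y hy
      obtain ⟨n, hnT, hyn⟩ := Set.mem_iUnion₂.1 hy
      obtain ⟨h1, h2, h3⟩ := hT hnT
      simp only [FractalComplement.I, enlarge, Set.mem_Icc] at h3
      simp only [FractalComplement.len] at h1 h2
      have hlen0 : 0 ≤ c.r n - c.l n := le_of_lt (by linarith [c.lt n])
      have haR : a * (c.r n - c.l n) ≤ a * R := mul_le_mul_of_nonneg_left h2 ha0.le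
      exact ⟨by linarith [hyn.1, hyn.2, h3.1, h3.2], by linarith [hyn.1, hyn.2, h3.1, h3.2]⟩
    have h1 : ∑ n ∈ T, volume (Set.Ioo (c.l n) (c.r n)) ≤ ENNReal.ofReal ((a+2)*R) := by
      rw [← hU]
      refine le_trans (measure_mono hsub2) ?_
      rw [Real.volume_Icc]
      apply le_of_eq
      congr 1
      ring
    have h2 : (T.card : ENNReal) * ENNReal.ofReal (lam*R)
        ≤ ∑ n ∈ T, volume (Set.Ioo (c.l n) (c.r n)) := by
      have hs : ∑ _n ∈ T, ENNReal.ofReal (lam*R) = (T.card : ENNReal) * ENNReal.ofReal (lam*R) := by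
        rw [Finset.sum_const, nsmul_eq_mul]
      rw [← hs]
      refine Finset.sum_le_sum fun n hn => ?_
      rw [Real.volume_Ioo]
      exact ENNReal.ofReal_le_ofReal (hT hn).1
    have h3 := le_trans h2 h1
    have h4 := ENNReal.toReal_mono (by simp) h3
    rw [ENNReal.toReal_mul, ENNReal.toReal_ofReal (by positivity : (0:ℝ) ≤ lam*R),
      ENNReal.toReal_ofReal (by positivity : (0:ℝ) ≤ (a+2)*R)] at h4
    simpa using h4
  have hfin : S.Finite := by
    by_contra hinf
    obtain ⟨T, hTs, hTc⟩ := Set.Infinite.exists_subset_card_eq hinf (⌈(a+2)/lam⌉₊ + 1)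
    have hc := hcount T hTs
    have hceil : (a+2)/lam ≤ (⌈(a+2)/lam⌉₊ : ℝ) := Nat.le_ceil _
    have hcard : ((a+2)/lam) < (T.card : ℝ) := by
      rw [hTc]; push_cast; linarith
    rw [div_lt_iff₀ hlam0] at hcard
    nlinarith
  refine ⟨hfin, ?_, ?_⟩
  · exact (Set.ncard_pos hfin).2 ⟨n0, hn0S⟩
  · have hc := hcount hfin.toFinset (by simp)
    rw [Set.ncard_eq_toFinset_card _ hfin, le_div_iff₀ hlam0]
    nlinarith
end
end

section
/- Let (c_n)_{n≥1} be a sequence of nonnegative reals and (ℓ_n)_{n≥1} a nonincreasing sequence with 0 < ℓ_n ≤ 1 and Σ_{n=1}^∞ ℓ_n ≤ 1. If there is a constant C such that Σ_{n=1}^N c_n ≤ C log N for all N ≥ 2, then for every ε > 0 the series Σ_{n=1}^∞ c_n ℓ_n^ε converges. -/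
/-!
Since `ℓ` is nonincreasing with `∑ ℓ ≤ 1`, we have `(n + 1) ℓ n ≤ ∑_{k ≤ n} ℓ k ≤ 1`, so
`ℓ n ^ ε ≤ 2 ^ (-k ε)` on the dyadic block `2 ^ k ≤ n < 2 ^ (k + 1)`. The logarithmic growth of
the partial sums bounds the `c`-mass of that block by `C (k + 1) log 2`, so the block contributes
at most `C log 2 · (k + 1) 2 ^ (-k ε)`, and these bounds form a convergent series.
-/

open MeasureTheory Filter Set
open scoped Classical

noncomputable section

theorem Antitone.succ_mul_le_tsum {f : ℕ → ℝ} (hf : Antitone f) (h0 : ∀ n, 0 ≤ f n)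
    (hs : Summable f) (n : ℕ) : ((n : ℝ) + 1) * f n ≤ ∑' k, f k :=
  calc ((n : ℝ) + 1) * f n = ∑ _k ∈ Finset.range (n + 1), f n := by simp
    _ ≤ ∑ k ∈ Finset.range (n + 1), f k :=
        Finset.sum_le_sum fun _k hk => hf (Nat.lt_succ_iff.mp (Finset.mem_range.mp hk))
    _ ≤ ∑' k, f k := hs.sum_le_tsum _ fun k _ => h0 k

theorem Antitone.le_inv_succ_of_tsum_le_one {f : ℕ → ℝ} (hf : Antitone f)
    (h0 : ∀ n, 0 ≤ f n) (hs : Summable f) (h1 : ∑' k, f k ≤ 1) (n : ℕ) :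
    f n ≤ ((n : ℝ) + 1)⁻¹ := by
  rw [← one_div, le_div_iff₀ (by positivity), mul_comm]
  exact (hf.succ_mul_le_tsum h0 hs n).trans h1

theorem Finset.sum_range_two_pow {M : Type*} [AddCommMonoid M] (a : ℕ → M) (K : ℕ) :
    ∑ n ∈ range (2 ^ K), a n = a 0 + ∑ k ∈ range K, ∑ n ∈ Ico (2 ^ k) (2 ^ (k + 1)), a n := by
  induction K with
  | zero => simp
  | succ K ih =>
    rw [← sum_range_add_sum_Ico _ (Nat.pow_le_pow_right two_pos K.le_succ), ih, sum_range_succ,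
      add_assoc]

theorem summable_of_sum_Ico_two_pow_le {a b : ℕ → ℝ} (ha : ∀ n, 0 ≤ a n) (hb : Summable b)
    (hab : ∀ k, ∑ n ∈ Finset.Ico (2 ^ k) (2 ^ (k + 1)), a n ≤ b k) : Summable a := by
  have hb0 : ∀ k, 0 ≤ b k := fun k => (Finset.sum_nonneg fun n _ => ha n).trans (hab k)
  refine summable_of_sum_range_le ha (c := a 0 + ∑' k, b k) fun N => ?_
  calc ∑ n ∈ Finset.range N, a n ≤ ∑ n ∈ Finset.range (2 ^ N), a n :=
        Finset.sum_le_sum_of_subset_of_nonneg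
          (Finset.range_subset_range.mpr Nat.lt_two_pow_self.le) fun n _ _ => ha n
    _ ≤ a 0 + ∑ k ∈ Finset.range N, b k := by
        rw [Finset.sum_range_two_pow]
        gcongr with k
        exact hab k
    _ ≤ a 0 + ∑' k, b k := by
        gcongr
        exact hb.sum_le_tsum _ fun k _ => hb0 k

theorem summable_succ_mul_geometric {r : ℝ} (hr0 : 0 ≤ r) (hr1 : r < 1) :
    Summable fun k : ℕ => ((k : ℝ) + 1) * r ^ k := by
  have hr : ‖r‖ < 1 := by rwa [Real.norm_of_nonneg hr0]
  refine ((summable_pow_mul_geometric_of_norm_lt_one 1 hr).add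
    (summable_geometric_of_lt_one hr0 hr1)).congr fun k => ?_
  simp only [pow_one]
  ring

theorem rpow_le_geometric_of_le_inv_succ {x ε : ℝ} {n k : ℕ} (hx : 0 ≤ x)
    (hxn : x ≤ ((n : ℝ) + 1)⁻¹) (hε : 0 ≤ ε) (hkn : 2 ^ k ≤ n) :
    x ^ ε ≤ ((2 : ℝ) ^ ε)⁻¹ ^ k := by
  have hx2 : x ≤ ((2 : ℝ) ^ k)⁻¹ := hxn.trans <| inv_anti₀ (by positivity) <| by
    exact_mod_cast hkn.trans n.le_succ
  calc x ^ ε ≤ ((2 : ℝ) ^ k)⁻¹ ^ ε := Real.rpow_le_rpow hx hx2 hε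
    _ = ((2 : ℝ) ^ ε)⁻¹ ^ k := by
        rw [Real.inv_rpow (by positivity), ← Real.rpow_pow_comm zero_le_two, inv_pow]

theorem summable_mul_rpow_of_sum_range_le_mul_log {c ℓ : ℕ → ℝ} (hc : ∀ n, 0 ≤ c n)
    (hℓ0 : ∀ n, 0 ≤ ℓ n) (hℓ : ∀ n, ℓ n ≤ ((n : ℝ) + 1)⁻¹) {C : ℝ}
    (hC : ∀ N : ℕ, 2 ≤ N → ∑ n ∈ Finset.range N, c n ≤ C * Real.log N) {ε : ℝ} (hε : 0 < ε) :
    Summable fun n => c n * ℓ n ^ ε := by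
  set r : ℝ := ((2 : ℝ) ^ ε)⁻¹
  have hr0 : 0 ≤ r := by positivity
  have hr1 : r < 1 := inv_lt_one_of_one_lt₀ (Real.one_lt_rpow one_lt_two hε)
  refine summable_of_sum_Ico_two_pow_le (b := fun k => C * Real.log 2 * (((k : ℝ) + 1) * r ^ k))
    (fun n => mul_nonneg (hc n) (Real.rpow_nonneg (hℓ0 n) ε))
    ((summable_succ_mul_geometric hr0 hr1).mul_left _) fun k => ?_
  have hlog : Real.log ((2 ^ (k + 1) : ℕ) : ℝ) = ((k : ℝ) + 1) * Real.log 2 := by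
    push_cast
    rw [Real.log_pow]
    push_cast
    ring
  calc ∑ n ∈ Finset.Ico (2 ^ k) (2 ^ (k + 1)), c n * ℓ n ^ ε
      ≤ ∑ n ∈ Finset.Ico (2 ^ k) (2 ^ (k + 1)), c n * r ^ k :=
        Finset.sum_le_sum fun n hn => mul_le_mul_of_nonneg_left
          (rpow_le_geometric_of_le_inv_succ (hℓ0 n) (hℓ n) hε.le (Finset.mem_Ico.mp hn).1) (hc n)
    _ ≤ (∑ n ∈ Finset.range (2 ^ (k + 1)), c n) * r ^ k := by
        rw [← Finset.sum_mul]
        gcongr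
        · exact fun n _ _ => hc n
        · exact fun n hn => Finset.mem_range.mpr (Finset.mem_Ico.mp hn).2
    _ ≤ C * Real.log ((2 ^ (k + 1) : ℕ) : ℝ) * r ^ k := by
        gcongr
        exact hC _ (Nat.le_self_pow k.succ_ne_zero 2)
    _ = C * Real.log 2 * (((k : ℝ) + 1) * r ^ k) := by
        rw [hlog]
        ring

theorem stmt_13_general (cs ls : ℕ → ℝ) (hcs : ∀ n, 0 ≤ cs n)
    (hls0 : ∀ n, 0 < ls n) (hmono : ∀ n, ls (n + 1) ≤ ls n)
    (hsummable : Summable ls) (hsum : ∑' n, ls n ≤ 1)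
    (C : ℝ) (hC : ∀ N : ℕ, 2 ≤ N → ∑ n ∈ Finset.range N, cs n ≤ C * Real.log N) :
    ∀ ε : ℝ, 0 < ε → Summable (fun n => cs n * ls n ^ ε) := fun _ε hε =>
  summable_mul_rpow_of_sum_range_le_mul_log hcs (fun n => (hls0 n).le)
    ((antitone_nat_of_succ_le hmono).le_inv_succ_of_tsum_le_one (fun n => (hls0 n).le)
      hsummable hsum) hC hε

/-- summability lemma. If the partial sums of the nonnegative `c_n` grow at
most logarithmically and `(ℓ_n)` is nonincreasing with `0 < ℓ_n ≤ 1` and `Σ ℓ_n ≤ 1`,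
then `Σ c_n ℓ_n^ε` converges for every `ε > 0`. -/
theorem stmt_13 (cs ls : ℕ → ℝ) (hcs : ∀ n, 0 ≤ cs n)
    (hls0 : ∀ n, 0 < ls n) (hls1 : ∀ n, ls n ≤ 1) (hmono : ∀ n, ls (n + 1) ≤ ls n)
    (hsummable : Summable ls) (hsum : ∑' n, ls n ≤ 1)
    (C : ℝ) (hC : ∀ N : ℕ, 2 ≤ N → ∑ n ∈ Finset.range N, cs n ≤ C * Real.log N) :
    ∀ ε : ℝ, 0 < ε → Summable (fun n => cs n * ls n ^ ε) :=
  stmt_13_general cs ls hcs hls0 hmono hsummable hsum C hC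
end
end
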